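/- Let S be a finite set of natural numbers with 1 ∉ S, and for each j ∈ S let a_j ∈ ℂ. Let P(z) = Σ_{j∈S} a_j z^j. Let u > 0 be real, θ ∈ ℝ, b, c ∈ ℂ, and set s = u·exp(-iθ). Define Q(w) = Σ_{j∈S} u^{1-j}·exp(i(j-1)θ)·a_j·(w - b)^j. Define the original orbit by z_0 = c, z_{l+1} = P(z_l) + c, and the transformed orbit by w_0 = s·c + b, w_{l+1} = Q(w_l) + (s·c + b). Then for every l ∈ ℕ, w_l = s·z_l + b. (Thus the componentwise transformed truncated polynomial fractal is the original one translated by b, rotated clockwise by θ, and scaled by the factor u.) -/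

import Mathlib

/-! An affine change of variable `w = s z + b` conjugates the escape-time map `z ↦ P z + c` to
`w ↦ Q w + (s c + b)` as soon as `Q (s z + b) = s P z`. For the componentwise transform this holds
term by term, because the factor `u^(1-j) e^{i(j-1)θ}` multiplying `a_j` is exactly
`s^(1-j)` for `s = u e^{-iθ}`, so that it turns `(s z)^j` into `s z^j`. -/

theorem escapeOrbit_affine_conj {R : Type*} [Semiring R] {P Q : R → R} {s b c : R} {z w : ℕ → R}
    (hPQ : ∀ x, Q (s * x + b) = s * P x)
    (hz0 : z 0 = c) (hz : ∀ l, z (l + 1) = P (z l) + c)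
    (hw0 : w 0 = s * c + b) (hw : ∀ l, w (l + 1) = Q (w l) + (s * c + b)) :
    ∀ l, w l = s * z l + b
  | 0 => by rw [hw0, hz0]
  | l + 1 => by
    rw [hw, escapeOrbit_affine_conj hPQ hz0 hz hw0 hw l, hPQ, hz, mul_add, add_assoc]

theorem sum_mul_shift_pow_eq_mul_sum {R : Type*} [CommRing R] (S : Finset ℕ) (k a : ℕ → R)
    {s : R} (hk : ∀ j ∈ S, k j * s ^ j = s) (b x : R) :
    ∑ j ∈ S, k j * a j * (s * x + b - b) ^ j = s * ∑ j ∈ S, a j * x ^ j := by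
  rw [Finset.mul_sum]
  refine Finset.sum_congr rfl fun j hj => ?_
  rw [add_sub_cancel_right]
  linear_combination a j * x ^ j * hk j hj

theorem ofReal_rpow_one_sub_mul_exp_mul_pow {u : ℝ} (hu : 0 < u) (θ : ℝ) (j : ℕ) :
    ((u ^ ((1 : ℝ) - j) : ℝ) : ℂ) * Complex.exp (Complex.I * ((j : ℂ) - 1) * θ) *
        ((u : ℂ) * Complex.exp (-(Complex.I * θ))) ^ j =
      (u : ℂ) * Complex.exp (-(Complex.I * θ)) := by
  have hmodulus : u ^ ((1 : ℝ) - j) * u ^ j = u := by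
    rw [← Real.rpow_natCast, ← Real.rpow_add hu, sub_add_cancel, Real.rpow_one]
  have hphase : Complex.exp (Complex.I * ((j : ℂ) - 1) * θ) *
      Complex.exp (-(Complex.I * θ)) ^ j = Complex.exp (-(Complex.I * θ)) := by
    rw [← Complex.exp_nat_mul, ← Complex.exp_add]
    ring_nf
  calc _ = ((u ^ ((1 : ℝ) - j) * u ^ j : ℝ) : ℂ) *
        (Complex.exp (Complex.I * ((j : ℂ) - 1) * θ) * Complex.exp (-(Complex.I * θ)) ^ j) := by
          push_cast; ring
    _ = _ := by rw [hmodulus, hphase]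

theorem truncated_polynomial_shape_preserving_general
    (S : Finset ℕ) (a : ℕ → ℂ)
    (P : ℂ → ℂ) (hP : ∀ x : ℂ, P x = ∑ j ∈ S, a j * x ^ j)
    (u : ℝ) (hu : 0 < u) (θ : ℝ) (b c : ℂ)
    (s : ℂ) (hs : s = (u : ℂ) * Complex.exp (-(Complex.I * θ)))
    (Q : ℂ → ℂ)
    (hQ : ∀ x : ℂ, Q x = ∑ j ∈ S,
      ((u ^ ((1 : ℝ) - (j : ℝ)) : ℝ) : ℂ) * Complex.exp (Complex.I * ((j : ℂ) - 1) * θ) *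
        a j * (x - b) ^ j)
    (z w : ℕ → ℂ)
    (hz0 : z 0 = c) (hz : ∀ l, z (l + 1) = P (z l) + c)
    (hw0 : w 0 = s * c + b)
    (hw : ∀ l, w (l + 1) = Q (w l) + (s * c + b)) :
    ∀ l, w l = s * z l + b := by
  subst hs
  refine escapeOrbit_affine_conj (fun x => ?_) hz0 hz hw0 hw
  rw [hQ, hP]
  exact sum_mul_shift_pow_eq_mul_sum S _ a
    (fun j _ => ofReal_rpow_one_sub_mul_exp_mul_pow hu θ j) b x

/-- Shape-preserving transformation of truncated polynomial fractals.
Let `P z = Σ_{j∈S} a_j z^j` with `1 ∉ S`, let `u > 0`, `θ ∈ ℝ`, `b, c ∈ ℂ`,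
`s = u·exp(-iθ)`, and `Q w = Σ_{j∈S} u^(1-j)·exp(i(j-1)θ)·a_j·(w-b)^j`.
If `z` is the orbit `z 0 = c, z (l+1) = P (z l) + c` and `w` is the orbit
`w 0 = s·c + b, w (l+1) = Q (w l) + (s·c + b)`, then `w l = s·z l + b` for all `l`. -/
theorem truncated_polynomial_shape_preserving
    (S : Finset ℕ) (hS : 1 ∉ S) (a : ℕ → ℂ)
    (P : ℂ → ℂ) (hP : ∀ x : ℂ, P x = ∑ j ∈ S, a j * x ^ j)
    (u : ℝ) (hu : 0 < u) (θ : ℝ) (b c : ℂ)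
    (s : ℂ) (hs : s = (u : ℂ) * Complex.exp (-(Complex.I * θ)))
    (Q : ℂ → ℂ)
    (hQ : ∀ x : ℂ, Q x = ∑ j ∈ S,
      ((u ^ ((1 : ℝ) - (j : ℝ)) : ℝ) : ℂ) * Complex.exp (Complex.I * ((j : ℂ) - 1) * θ) *
        a j * (x - b) ^ j)
    (z w : ℕ → ℂ)
    (hz0 : z 0 = c) (hz : ∀ l, z (l + 1) = P (z l) + c)
    (hw0 : w 0 = s * c + b)
    (hw : ∀ l, w (l + 1) = Q (w l) + (s * c + b)) :
    ∀ l, w l = s * z l + b :=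
  truncated_polynomial_shape_preserving_general S a P hP u hu θ b c s hs Q hQ z w hz0 hz hw0 hw
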